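/- Let X, Y, U_1, …, U_M, Z̃ = (Z̃^{(1)}, …, Z̃^{(K)}) and coverage indicators C = (C_{j,k})_{j ≤ M, k ≤ K} satisfy: (a) H(Y | X, U) = 0 with U = (U_1, …, U_M); (b) U_1, …, U_M mutually conditionally independent given X; (c) H(U | X) = H(Y | X); (d) C independent of (X, Y, U), P(C_{j,k} = 1) = α ∈ (0,1) for all j, k, with {C_{j,k}}_{k=1}^K mutually independent for each fixed j; (e) for every coverage configuration c with P(C = c) > 0 and every j such that c_{j,k} = 1 for some k, the conditional entropy H(U_j | X, Z̃) computed under P(· | C = c) equals 0. Then the expected recoverable information satisfies ∑_c P(C = c) · I(Z̃; Y | X) computed under P(· | C = c) ≥ H(Y | X) · (1 − (1 − α)^K) ≥ H(Y | X) · (1 − e^{−αK}). -/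

import Mathlib

/-!
For a fixed coverage configuration `c`, conditioning on `C = c` leaves the law of `(X, Y, U)`
unchanged. As `Y` is a function of `(X, U)`,
`H(Y | X, Z̃) ≤ H(U | X, Z̃) ≤ ∑ⱼ H(Uⱼ | X, Z̃)`, and covered bits contribute nothing, so
`I(Z̃; Y | X) ≥ H(Y | X) - ∑_{j uncovered} H(Uⱼ | X)`.
Averaging over `c`, each bit is uncovered with probability `(1 - α)^K`, while conditional
independence gives `∑ⱼ H(Uⱼ | X) = H(U | X) = H(Y | X)`. Finally `1 - α ≤ e^{-α}`.
-/

open MeasureTheory ProbabilityTheory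

/-- Shannon entropy (in nats) of a finitely-valued random variable `X` under `μ`. -/
noncomputable def entH {Ω : Type*} [MeasurableSpace Ω] (μ : Measure Ω)
    {S : Type*} [Fintype S] (X : Ω → S) : ℝ :=
  ∑ s : S, Real.negMulLog ((μ (X ⁻¹' {s})).toReal)

/-- Conditional Shannon entropy `H(Y | X) = H(X, Y) - H(X)`. -/
noncomputable def condEntH {Ω : Type*} [MeasurableSpace Ω] (μ : Measure Ω)
    {S T : Type*} [Fintype S] [Fintype T] (Y : Ω → T) (X : Ω → S) : ℝ :=
  entH μ (fun ω => (X ω, Y ω)) - entH μ X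

/-- Conditional mutual information `I(A; B | C) = H(A | C) - H(A | (B, C))`. -/
noncomputable def condMI {Ω : Type*} [MeasurableSpace Ω] (μ : Measure Ω)
    {A B C : Type*} [Fintype A] [Fintype B] [Fintype C]
    (fA : Ω → A) (fB : Ω → B) (fC : Ω → C) : ℝ :=
  condEntH μ fA fC - condEntH μ fA (fun ω => (fB ω, fC ω))

open Finset Real

section Entropy

variable {Ω : Type*} [MeasurableSpace Ω] {μ : Measure Ω}
  {S T V W : Type*} [Fintype S] [Fintype T] [Fintype V] [Fintype W]

lemma entH_def (X : Ω → S) : entH μ X = ∑ s, negMulLog (μ.real (X ⁻¹' {s})) := rfl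

lemma entH_nonneg [IsZeroOrProbabilityMeasure μ] (X : Ω → S) : 0 ≤ entH μ X :=
  sum_nonneg fun _ _ => negMulLog_nonneg measureReal_nonneg measureReal_le_one

lemma entH_comp_of_injective {f : S → T} (hf : Function.Injective f) (X : Ω → S) :
    entH μ (fun ω => f (X ω)) = entH μ X := by
  refine (Fintype.sum_of_injective f hf _ _ (fun t ht => ?_) fun s => ?_).symm
  · have : (fun ω => f (X ω)) ⁻¹' {t} = ∅ :=
      Set.eq_empty_of_forall_notMem fun ω h => ht ⟨X ω, h⟩
    simp [this]
  · congr 3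
    ext ω
    simp [hf.eq_iff]

lemma condEntH_comp_left_of_injective {f : T → V} (hf : Function.Injective f)
    (Y : Ω → T) (X : Ω → S) : condEntH μ (fun ω => f (Y ω)) X = condEntH μ Y X :=
  congrArg (· - entH μ X)
    (entH_comp_of_injective (Function.injective_id.prodMap hf) fun ω => (X ω, Y ω))

lemma condEntH_comp_right_of_injective {f : S → V} (hf : Function.Injective f)
    (Y : Ω → T) (X : Ω → S) : condEntH μ Y (fun ω => f (X ω)) = condEntH μ Y X :=
  congrArg₂ (· - ·)
    (entH_comp_of_injective (hf.prodMap Function.injective_id) fun ω => (X ω, Y ω))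
    (entH_comp_of_injective hf X)

lemma condEntH_of_subsingleton [Subsingleton T] (Y : Ω → T) (X : Ω → S) :
    condEntH μ Y X = 0 :=
  sub_eq_zero.2 (entH_comp_of_injective (f := Prod.fst)
    (fun _ _ h => Prod.ext h (Subsingleton.elim _ _)) fun ω => (X ω, Y ω)).symm

lemma condEntH_chain_rule (A : Ω → S) (B : Ω → T) (C : Ω → W) :
    condEntH μ (fun ω => (A ω, B ω)) C
      = condEntH μ A C + condEntH μ B (fun ω => (A ω, C ω)) := by
  have h₁ : entH μ (fun ω => (C ω, A ω, B ω)) = entH μ (fun ω => ((A ω, C ω), B ω)) :=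
    entH_comp_of_injective (f := fun p : (S × W) × T => (p.1.2, p.1.1, p.2))
      (fun p q h => by simp_all [Prod.ext_iff]) fun ω => ((A ω, C ω), B ω)
  have h₂ : entH μ (fun ω => (C ω, A ω)) = entH μ (fun ω => (A ω, C ω)) :=
    entH_comp_of_injective Prod.swap_injective fun ω => (A ω, C ω)
  simp only [condEntH, h₁, h₂]
  ring

lemma condMI_comm (A : Ω → S) (B : Ω → T) (C : Ω → W) :
    condMI μ A B C = condMI μ B A C := by
  have h₁ : entH μ (fun ω => ((B ω, C ω), A ω)) = entH μ (fun ω => ((A ω, C ω), B ω)) :=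
    entH_comp_of_injective (f := fun p : (S × W) × T => ((p.2, p.1.2), p.1.1))
      (fun p q h => by simp_all [Prod.ext_iff]) fun ω => ((A ω, C ω), B ω)
  have h₂ : entH μ (fun ω => (C ω, A ω)) = entH μ (fun ω => (A ω, C ω)) :=
    entH_comp_of_injective Prod.swap_injective fun ω => (A ω, C ω)
  have h₃ : entH μ (fun ω => (C ω, B ω)) = entH μ (fun ω => (B ω, C ω)) :=
    entH_comp_of_injective Prod.swap_injective fun ω => (B ω, C ω)
  simp only [condMI, condEntH, h₁, h₂, h₃]
  ring

end Entropy

section Conditioning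

variable {Ω : Type*} [MeasurableSpace Ω] {μ : Measure Ω} {S T : Type*} [Fintype S] [Fintype T]
  [MeasurableSpace S] [MeasurableSingletonClass S] [MeasurableSpace T] [MeasurableSingletonClass T]

lemma measureReal_inter_eq_mul_cond [IsFiniteMeasure μ] {s : Set Ω} (hs : MeasurableSet s)
    (t : Set Ω) : μ.real (s ∩ t) = μ.real s * (μ[|s]).real t := by
  rw [measureReal_def, ← cond_mul_eq_inter hs t μ, ENNReal.toReal_mul, mul_comm]
  rfl

lemma sum_measureReal_preimage_inter [IsFiniteMeasure μ] {X : Ω → S} (hX : Measurable X)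
    (t : Set Ω) : ∑ s, μ.real (X ⁻¹' {s} ∩ t) = μ.real t := by
  have := sum_measureReal_preimage_singleton (μ := μ.restrict t) univ
    fun s _ => hX (measurableSet_singleton s)
  simpa [measureReal_restrict_apply (hX (measurableSet_singleton _))] using this

lemma sum_measureReal_preimage_singleton_eq_one [IsProbabilityMeasure μ] {X : Ω → S}
    (hX : Measurable X) : ∑ s, μ.real (X ⁻¹' {s}) = 1 := by
  rw [sum_measureReal_preimage_singleton _ fun s _ => hX (measurableSet_singleton s)]
  simp

lemma condEntH_eq_sum [IsFiniteMeasure μ] {X : Ω → S} {Y : Ω → T} (hX : Measurable X)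
    (hY : Measurable Y) :
    condEntH μ Y X = ∑ x, μ.real (X ⁻¹' {x}) * entH μ[|X ⁻¹' {x}] Y := by
  have hfib : ∀ x y, μ.real ((fun ω => (X ω, Y ω)) ⁻¹' {(x, y)})
      = μ.real (X ⁻¹' {x}) * (μ[|X ⁻¹' {x}]).real (Y ⁻¹' {y}) := fun x y => by
    rw [← measureReal_inter_eq_mul_cond (hX (measurableSet_singleton x))]
    congr 1
    ext ω
    simp [Prod.ext_iff]
  have hsum : ∀ x, (∑ y, (μ[|X ⁻¹' {x}]).real (Y ⁻¹' {y})) * negMulLog (μ.real (X ⁻¹' {x}))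
      = negMulLog (μ.real (X ⁻¹' {x})) := fun x => by
    by_cases hx : μ (X ⁻¹' {x}) = 0
    · simp [measureReal_def, hx]
    · have := cond_isProbabilityMeasure (μ := μ) hx
      rw [sum_measureReal_preimage_singleton_eq_one hY, one_mul]
  rw [condEntH, entH_def, entH_def, Fintype.sum_prod_type, ← sum_sub_distrib]
  refine sum_congr rfl fun x _ => ?_
  simp only [hfib, negMulLog_mul, sum_add_distrib, ← sum_mul, ← mul_sum, hsum, entH_def]
  ring

lemma condEntH_nonneg [IsFiniteMeasure μ] {X : Ω → S} {Y : Ω → T} (hX : Measurable X)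
    (hY : Measurable Y) : 0 ≤ condEntH μ Y X := by
  rw [condEntH_eq_sum hX hY]
  exact sum_nonneg fun x _ => mul_nonneg measureReal_nonneg (entH_nonneg Y)

/-- Jensen's inequality for the concave `negMulLog`: the law of `Y` is the `X`-average of its
conditional laws. -/
lemma condEntH_le_entH [IsZeroOrProbabilityMeasure μ] {X : Ω → S} {Y : Ω → T}
    (hX : Measurable X) (hY : Measurable Y) : condEntH μ Y X ≤ entH μ Y := by
  rcases eq_zero_or_isProbabilityMeasure μ with rfl | _
  · simp [condEntH, entH_def]
  rw [condEntH_eq_sum hX hY]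
  simp only [entH_def, mul_sum]
  rw [sum_comm]
  gcongr with y
  have hmarg : ∑ x, μ.real (X ⁻¹' {x}) * (μ[|X ⁻¹' {x}]).real (Y ⁻¹' {y})
      = μ.real (Y ⁻¹' {y}) := by
    simp only [← measureReal_inter_eq_mul_cond (hX (measurableSet_singleton _))]
    exact sum_measureReal_preimage_inter hX _
  rw [← hmarg]
  exact concaveOn_negMulLog.le_map_sum (fun _ _ => measureReal_nonneg)
    (sum_measureReal_preimage_singleton_eq_one hX)
    fun _ _ => Set.mem_Ici.2 measureReal_nonneg

end Conditioning

section Monotonicity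

variable {Ω : Type*} [MeasurableSpace Ω] {μ : Measure Ω} [IsFiniteMeasure μ]
  {S T V W : Type*} [Fintype S] [Fintype T] [Fintype V] [Fintype W]
  [MeasurableSpace S] [MeasurableSingletonClass S] [MeasurableSpace T] [MeasurableSingletonClass T]
  [MeasurableSpace V] [MeasurableSingletonClass V] [MeasurableSpace W] [MeasurableSingletonClass W]
  {A : Ω → S} {B : Ω → T} {C : Ω → W}

lemma condEntH_pair_le {V' : Ω → V} (hA : Measurable A) (hV : Measurable V')
    (hC : Measurable C) : condEntH μ A (fun ω => (V' ω, C ω)) ≤ condEntH μ A C := by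
  have hchain := condEntH_chain_rule (μ := μ) V' A C
  rw [condEntH_eq_sum hC (hV.prodMk hA), condEntH_eq_sum hC hV] at hchain
  calc condEntH μ A (fun ω => (V' ω, C ω))
      = ∑ w, μ.real (C ⁻¹' {w}) * condEntH μ[|C ⁻¹' {w}] A V' := by
        simp only [condEntH, mul_sub, sum_sub_distrib] at hchain ⊢
        linarith
    _ ≤ ∑ w, μ.real (C ⁻¹' {w}) * entH μ[|C ⁻¹' {w}] A := by
        gcongr with w
        exact condEntH_le_entH hV hA
    _ = condEntH μ A C := (condEntH_eq_sum hC hA).symm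

lemma condEntH_le_condEntH_comp (hA : Measurable A) (hC : Measurable C) (g : W → V) :
    condEntH μ A C ≤ condEntH μ A (fun ω => g (C ω)) :=
  calc condEntH μ A C = condEntH μ A (fun ω => (C ω, g (C ω))) :=
        (condEntH_comp_right_of_injective (f := fun w => (w, g w))
          (fun _ _ h => (Prod.ext_iff.1 h).1) A C).symm
    _ ≤ condEntH μ A (fun ω => g (C ω)) :=
        condEntH_pair_le hA hC ((Measurable.of_discrete (f := g)).comp hC)

lemma condEntH_comp_le (hA : Measurable A) (hC : Measurable C) (g : S → V) :
    condEntH μ (fun ω => g (A ω)) C ≤ condEntH μ A C :=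
  calc condEntH μ (fun ω => g (A ω)) C
      ≤ condEntH μ (fun ω => g (A ω)) C + condEntH μ A (fun ω => (g (A ω), C ω)) :=
        le_add_of_nonneg_right
          (condEntH_nonneg (((Measurable.of_discrete (f := g)).comp hA).prodMk hC) hA)
    _ = condEntH μ A C := by
        rw [← condEntH_chain_rule]
        exact condEntH_comp_left_of_injective (f := fun a => (g a, a))
          (fun _ _ h => (Prod.ext_iff.1 h).2) A C

lemma condEntH_pair_le_add (hA : Measurable A) (hB : Measurable B) (hC : Measurable C) :
    condEntH μ (fun ω => (A ω, B ω)) C ≤ condEntH μ A C + condEntH μ B C := by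
  rw [condEntH_chain_rule]
  gcongr
  exact condEntH_pair_le hB hA hC

lemma condEntH_pi_le_sum {n : ℕ} {κ : Fin n → Type*} [∀ i, Fintype (κ i)]
    [∀ i, MeasurableSpace (κ i)] [∀ i, MeasurableSingletonClass (κ i)]
    {U : ∀ i, Ω → κ i} (hU : ∀ i, Measurable (U i)) (hC : Measurable C) :
    condEntH μ (fun ω i => U i ω) C ≤ ∑ i, condEntH μ (U i) C := by
  induction n with
  | zero => simp [condEntH_of_subsingleton]
  | succ n ih =>
    calc condEntH μ (fun ω i => U i ω) C
        = condEntH μ (fun ω => (U 0 ω, fun i : Fin n => U i.succ ω)) C :=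
          (condEntH_comp_left_of_injective (Fin.consEquiv κ).symm.injective _ C).symm
      _ ≤ condEntH μ (U 0) C + condEntH μ (fun ω (i : Fin n) => U i.succ ω) C :=
          condEntH_pair_le_add (hU 0) (measurable_pi_lambda _ fun i => hU i.succ) hC
      _ ≤ condEntH μ (U 0) C + ∑ i : Fin n, condEntH μ (U i.succ) C := by
          gcongr
          exact ih fun i => hU i.succ
      _ = ∑ i, condEntH μ (U i) C := (Fin.sum_univ_succ fun i => condEntH μ (U i) C).symm

end Monotonicity

section Independence

variable {Ω : Type*} [MeasurableSpace Ω] {μ : Measure Ω}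
  {S T : Type*} [Fintype S] [Fintype T]
  [MeasurableSpace S] [MeasurableSingletonClass S] [MeasurableSpace T] [MeasurableSingletonClass T]

lemma entH_pair_of_indepFun [IsProbabilityMeasure μ] {A : Ω → S} {B : Ω → T}
    (hA : Measurable A) (hB : Measurable B) (h : IndepFun A B μ) :
    entH μ (fun ω => (A ω, B ω)) = entH μ A + entH μ B := by
  have hfib : ∀ a b, μ.real ((fun ω => (A ω, B ω)) ⁻¹' {(a, b)})
      = μ.real (A ⁻¹' {a}) * μ.real (B ⁻¹' {b}) := fun a b => by
    rw [measureReal_def, measureReal_def, measureReal_def, ← ENNReal.toReal_mul,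
      ← h.measure_inter_preimage_eq_mul _ _ (measurableSet_singleton a)
        (measurableSet_singleton b)]
    congr 2
    ext ω
    simp [Prod.ext_iff]
  simp only [entH_def, Fintype.sum_prod_type, hfib, negMulLog_mul, sum_add_distrib, ← sum_mul,
    ← mul_sum, sum_measureReal_preimage_singleton_eq_one hA,
    sum_measureReal_preimage_singleton_eq_one hB]
  ring

lemma entH_pi_of_iIndepFun [IsProbabilityMeasure μ] {n : ℕ} {κ : Fin n → Type*}
    [∀ i, Fintype (κ i)] [∀ i, MeasurableSpace (κ i)] [∀ i, MeasurableSingletonClass (κ i)]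
    {U : ∀ i, Ω → κ i} (hU : ∀ i, Measurable (U i)) (h : iIndepFun U μ) :
    entH μ (fun ω i => U i ω) = ∑ i, entH μ (U i) := by
  induction n with
  | zero =>
    have : (fun ω (i : Fin 0) => U i ω) ⁻¹' {default} = Set.univ :=
      Set.eq_univ_of_forall fun _ => Subsingleton.elim _ _
    simp [entH_def, this]
  | succ n ih =>
    have hindep : IndepFun (U 0) (fun ω (i : Fin n) => U i.succ ω) μ := by
      have hsplit := h.indepFun_finset {0} (univ.map (Fin.succEmb n))
        (by simp [Fin.succ_ne_zero]) hU
      have hφ : Measurable fun v : (∀ i : ({0} : Finset (Fin (n + 1))), κ i) =>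
          v ⟨0, mem_singleton_self 0⟩ := measurable_pi_apply _
      have hψ : Measurable fun (v : ∀ i : (univ.map (Fin.succEmb n)), κ i) (i : Fin n) =>
          v ⟨i.succ, by simp⟩ := measurable_pi_lambda _ fun i => measurable_pi_apply _
      exact hsplit.comp hφ hψ
    calc entH μ (fun ω i => U i ω)
        = entH μ (fun ω => (U 0 ω, fun i : Fin n => U i.succ ω)) :=
          (entH_comp_of_injective (Fin.consEquiv κ).symm.injective _).symm
      _ = entH μ (U 0) + ∑ i : Fin n, entH μ (U i.succ) := by
          rw [entH_pair_of_indepFun (hU 0) (measurable_pi_lambda _ fun i => hU i.succ) hindep,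
            ih (fun i => hU i.succ) (h.precomp (Fin.succ_injective n))]
      _ = ∑ i, entH μ (U i) := (Fin.sum_univ_succ fun i => entH μ (U i)).symm

lemma condEntH_pi_eq_sum_of_condIndep [IsFiniteMeasure μ] {n : ℕ} {κ : Fin n → Type*}
    [∀ i, Fintype (κ i)] [∀ i, MeasurableSpace (κ i)] [∀ i, MeasurableSingletonClass (κ i)]
    {X : Ω → S} {U : ∀ i, Ω → κ i} (hX : Measurable X) (hU : ∀ i, Measurable (U i))
    (h : ∀ x, μ (X ⁻¹' {x}) ≠ 0 → iIndepFun U μ[|X ⁻¹' {x}]) :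
    condEntH μ (fun ω i => U i ω) X = ∑ i, condEntH μ (U i) X := by
  simp only [condEntH_eq_sum hX (measurable_pi_lambda _ hU), condEntH_eq_sum hX (hU _)]
  rw [sum_comm]
  refine sum_congr rfl fun x _ => ?_
  by_cases hx : μ (X ⁻¹' {x}) = 0
  · simp [measureReal_def, hx]
  · have := cond_isProbabilityMeasure (μ := μ) hx
    rw [entH_pi_of_iIndepFun hU (h x hx), mul_sum]

end Independence

section Transfer

variable {Ω : Type*} [MeasurableSpace Ω] {μ : Measure Ω} [IsFiniteMeasure μ]
  {β γ S T : Type*} [MeasurableSpace β] [MeasurableSpace γ] [Fintype S] [Fintype T]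
  {C : Ω → β} {Z : Ω → γ}

lemma cond_preimage_eq_of_indepFun (h : IndepFun C Z μ) (hC : Measurable C) {s : Set β}
    (hs : MeasurableSet s) (hCs : μ (C ⁻¹' s) ≠ 0) {t : Set γ} (ht : MeasurableSet t) :
    μ[|C ⁻¹' s] (Z ⁻¹' t) = μ (Z ⁻¹' t) := by
  rw [cond_apply (hC hs), h.measure_inter_preimage_eq_mul _ _ hs ht, ← mul_assoc,
    ENNReal.inv_mul_cancel hCs (measure_ne_top _ _), one_mul]

variable [MeasurableSingletonClass β] [DiscreteMeasurableSpace γ]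

lemma entH_cond_eq_of_indepFun (h : IndepFun C Z μ) (hC : Measurable C) {c : β}
    (hc : μ (C ⁻¹' {c}) ≠ 0) (g : γ → S) :
    entH μ[|C ⁻¹' {c}] (fun ω => g (Z ω)) = entH μ (fun ω => g (Z ω)) :=
  sum_congr rfl fun s _ => congrArg (fun m => negMulLog (ENNReal.toReal m))
    (cond_preimage_eq_of_indepFun h hC (measurableSet_singleton c) hc
      (.of_discrete (s := g ⁻¹' {s})))

lemma condEntH_cond_eq_of_indepFun (h : IndepFun C Z μ) (hC : Measurable C) {c : β}
    (hc : μ (C ⁻¹' {c}) ≠ 0) (f : γ → S) (g : γ → T) :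
    condEntH μ[|C ⁻¹' {c}] (fun ω => g (Z ω)) (fun ω => f (Z ω))
      = condEntH μ (fun ω => g (Z ω)) (fun ω => f (Z ω)) :=
  congrArg₂ (· - ·) (entH_cond_eq_of_indepFun h hC hc fun z => (f z, g z))
    (entH_cond_eq_of_indepFun h hC hc f)

end Transfer

section Coverage

variable {Ω : Type*} [MeasurableSpace Ω] {μ : Measure Ω}

lemma measureReal_forall_eq_false_of_iIndepFun [IsProbabilityMeasure μ] {ι : Type*}
    [Fintype ι] {B : ι → Ω → Bool} (hB : ∀ i, Measurable (B i)) (h : iIndepFun B μ) {p : ℝ}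
    (hp : 0 ≤ p) (hpB : ∀ i, μ {ω | B i ω = true} = ENNReal.ofReal p) :
    μ.real {ω | ∀ i, B i ω = false} = (1 - p) ^ Fintype.card ι := by
  have hfalse : ∀ i, μ.real (B i ⁻¹' {false}) = 1 - p := fun i => by
    rw [show B i ⁻¹' {false} = {ω | B i ω = true}ᶜ by ext; simp,
      probReal_compl_eq_one_sub (s := {ω | B i ω = true}) (hB i (measurableSet_singleton true)),
      measureReal_def, hpB i, ENNReal.toReal_ofReal hp]
  have hset : {ω | ∀ i, B i ω = false} = ⋂ i, B i ⁻¹' {false} := by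
    ext
    simp
  rw [hset, measureReal_def, h.meas_iInter fun i => ⟨{false}, measurableSet_singleton _, rfl⟩,
    ENNReal.toReal_prod]
  simp only [← measureReal_def, hfalse, prod_const, card_univ]

lemma sum_measureReal_mul_sum_filter [IsFiniteMeasure μ] {β ι : Type*} [Fintype β]
    [MeasurableSpace β] [MeasurableSingletonClass β] [Fintype ι] {C : Ω → β} (hC : Measurable C)
    (P : ι → β → Prop) [∀ i, DecidablePred (P i)] (f : ι → ℝ) :
    ∑ b, μ.real (C ⁻¹' {b}) * ∑ i ∈ univ.filter (fun i => P i b), f i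
      = ∑ i, f i * μ.real {ω | P i (C ω)} := by
  simp_rw [mul_sum, sum_filter]
  rw [sum_comm]
  refine sum_congr rfl fun i _ => ?_
  rw [← sum_filter, ← sum_mul, mul_comm,
    sum_measureReal_preimage_singleton _ fun b _ => hC (measurableSet_singleton b)]
  congr 2
  ext
  simp

end Coverage

lemma one_sub_pow_le_exp_neg_mul {a : ℝ} (ha : a ≤ 1) (n : ℕ) :
    (1 - a) ^ n ≤ exp (-(a * n)) :=
  calc (1 - a) ^ n ≤ exp (-a) ^ n := pow_le_pow_left₀ (by linarith) (one_sub_le_exp_neg a) n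
    _ = exp (-(a * n)) := by rw [← exp_nat_mul]; ring_nf

section Recovery

variable {Ω : Type*} [MeasurableSpace Ω] {μ : Measure Ω} [IsFiniteMeasure μ]
  {S T V : Type*} [Fintype S] [Fintype T] [Fintype V]
  [MeasurableSpace S] [MeasurableSingletonClass S] [MeasurableSpace T] [MeasurableSingletonClass T]
  [MeasurableSpace V] [MeasurableSingletonClass V]
  {n : ℕ} {κ : Fin n → Type*} [∀ i, Fintype (κ i)] [∀ i, MeasurableSpace (κ i)]
  [∀ i, MeasurableSingletonClass (κ i)] {X : Ω → S} {Y : Ω → T} {Z : Ω → V} {U : ∀ i, Ω → κ i}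

lemma condEntH_sub_sum_le_condMI (hX : Measurable X) (hY : Measurable Y) (hZ : Measurable Z)
    (hU : ∀ i, Measurable (U i)) (s : Finset (Fin n))
    (hYU : condEntH μ Y (fun ω => (X ω, fun i => U i ω)) = 0)
    (hUZ : ∀ i ∉ s, condEntH μ (U i) (fun ω => (X ω, Z ω)) = 0) :
    condEntH μ Y X - ∑ i ∈ s, condEntH μ (U i) X ≤ condMI μ Z Y X := by
  have hW : Measurable fun ω => (X ω, Z ω) := hX.prodMk hZ
  have hUt : Measurable fun ω i => U i ω := measurable_pi_lambda _ hU
  have hYW : condEntH μ Y (fun ω => (X ω, Z ω)) ≤ ∑ i ∈ s, condEntH μ (U i) X :=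
    calc condEntH μ Y (fun ω => (X ω, Z ω))
        ≤ condEntH μ (fun ω => ((fun i => U i ω), Y ω)) (fun ω => (X ω, Z ω)) :=
          condEntH_comp_le (hUt.prodMk hY) hW Prod.snd
      _ = condEntH μ (fun ω i => U i ω) (fun ω => (X ω, Z ω))
          + condEntH μ Y (fun ω => ((fun i => U i ω), X ω, Z ω)) := condEntH_chain_rule _ _ _
      _ ≤ ∑ i, condEntH μ (U i) (fun ω => (X ω, Z ω)) + 0 := by
          gcongr
          · exact condEntH_pi_le_sum hU hW
          · rw [← hYU]
            exact condEntH_le_condEntH_comp hY (hUt.prodMk hW) fun p => (p.2.1, p.1)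
      _ ≤ ∑ i, if i ∈ s then condEntH μ (U i) X else 0 := by
          rw [add_zero]
          gcongr with i
          split_ifs with hi
          · exact condEntH_le_condEntH_comp (hU i) hW Prod.fst
          · exact (hUZ i hi).le
      _ = ∑ i ∈ s, condEntH μ (U i) X := by rw [sum_ite_mem, univ_inter]
  have hZX : condEntH μ Y (fun ω => (Z ω, X ω)) ≤ condEntH μ Y (fun ω => (X ω, Z ω)) :=
    condEntH_le_condEntH_comp hY (hZ.prodMk hX) Prod.swap
  rw [condMI_comm, condMI]
  linarith

/-- The bound for a single coverage configuration `C = c`, `s` being its set of uncovered bits. -/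
lemma condEntH_sub_sum_le_condMI_cond {β : Type*} [MeasurableSpace β] [MeasurableSingletonClass β]
    {C : Ω → β} (hC : Measurable C) {c : β} (hc : μ (C ⁻¹' {c}) ≠ 0)
    (hind : IndepFun C (fun ω => (X ω, Y ω, fun i => U i ω)) μ)
    (hX : Measurable X) (hY : Measurable Y) (hZ : Measurable Z) (hU : ∀ i, Measurable (U i))
    (s : Finset (Fin n)) (hYU : condEntH μ Y (fun ω => (X ω, fun i => U i ω)) = 0)
    (hUZ : ∀ i ∉ s, condEntH μ[|C ⁻¹' {c}] (U i) (fun ω => (X ω, Z ω)) = 0) :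
    condEntH μ Y X - ∑ i ∈ s, condEntH μ (U i) X ≤ condMI μ[|C ⁻¹' {c}] Z Y X := by
  have := cond_isProbabilityMeasure (μ := μ) hc
  have hYX := condEntH_cond_eq_of_indepFun hind hC hc (fun t => t.1) (fun t => t.2.1)
  have hUX := fun i => condEntH_cond_eq_of_indepFun hind hC hc (fun t => t.1) (fun t => t.2.2 i)
  have hYU' := condEntH_cond_eq_of_indepFun hind hC hc (fun t => (t.1, t.2.2)) (fun t => t.2.1)
  rw [← hYX]
  simp_rw [← hUX]
  exact condEntH_sub_sum_le_condMI hX hY hZ hU s (hYU'.trans hYU) hUZ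

end Recovery

theorem saturated_lower_bound_effective_channels_general
    {Ω : Type*} [MeasurableSpace Ω] (μ : Measure Ω) [IsProbabilityMeasure μ]
    {𝓧 𝓨 : Type*} [Fintype 𝓧] [Fintype 𝓨]
    [MeasurableSpace 𝓧] [DiscreteMeasurableSpace 𝓧]
    [MeasurableSpace 𝓨] [DiscreteMeasurableSpace 𝓨]
    {M K : ℕ}
    {𝓤 : Fin M → Type*} [∀ j, Fintype (𝓤 j)]
    [∀ j, MeasurableSpace (𝓤 j)] [∀ j, DiscreteMeasurableSpace (𝓤 j)]
    {𝓩 : Fin K → Type*} [∀ k, Fintype (𝓩 k)]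
    [∀ k, MeasurableSpace (𝓩 k)] [∀ k, DiscreteMeasurableSpace (𝓩 k)]
    (X : Ω → 𝓧) (Y : Ω → 𝓨) (U : ∀ j, Ω → 𝓤 j) (Ztil : ∀ k, Ω → 𝓩 k)
    (C : Ω → (Fin M → Fin K → Bool))
    (hX : Measurable X) (hY : Measurable Y) (hU : ∀ j, Measurable (U j))
    (hZtil : ∀ k, Measurable (Ztil k)) (hC : Measurable C)
    {α : ℝ} (hα : α ∈ Set.Ioo (0 : ℝ) 1)
    -- (a) sufficiency: H(Y | X, U) = 0
    (ha : condEntH μ Y (fun ω => (X ω, fun j => U j ω)) = 0)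
    -- (b) the U_j are mutually conditionally independent given X
    (hb : ∀ x : 𝓧, μ (X ⁻¹' {x}) ≠ 0 →
        iIndepFun U (μ[|X ⁻¹' {x}]))
    -- (c) matching uncertainty scale: H(U | X) = H(Y | X)
    (hc : condEntH μ (fun ω (j : Fin M) => U j ω) X = condEntH μ Y X)
    -- (d) coverage indicators: independent of (X, Y, U), each of probability α,
    --     and independent across channels for each fixed bit j
    (hd1 : IndepFun C (fun ω => (X ω, Y ω, fun j => U j ω)) μ)
    (hd2 : ∀ j k, μ {ω | C ω j k = true} = ENNReal.ofReal α)
    (hd3 : ∀ j : Fin M, iIndepFun (fun k ω => C ω j k) μ)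
    -- (e) a covered bit has zero residual entropy given (X, Z̃)
    (he : ∀ c : Fin M → Fin K → Bool, μ (C ⁻¹' {c}) ≠ 0 → ∀ j : Fin M,
        (∃ k, c j k = true) →
        condEntH (μ[|C ⁻¹' {c}]) (U j) (fun ω => (X ω, fun k => Ztil k ω)) = 0) :
    (∑ c : Fin M → Fin K → Bool, (μ (C ⁻¹' {c})).toReal *
        condMI (μ[|C ⁻¹' {c}]) (fun ω (k : Fin K) => Ztil k ω) Y X)
      ≥ condEntH μ Y X * (1 - (1 - α) ^ K) ∧
    condEntH μ Y X * (1 - (1 - α) ^ K) ≥ condEntH μ Y X * (1 - Real.exp (-(α * K))) := by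
  have hH : condEntH μ Y X = ∑ j, condEntH μ (U j) X :=
    hc ▸ condEntH_pi_eq_sum_of_condIndep hX hU hb
  have hconf : ∀ c, μ.real (C ⁻¹' {c}) * (condEntH μ Y X
      - ∑ j ∈ univ.filter (fun j => ∀ k, c j k = false), condEntH μ (U j) X)
      ≤ μ.real (C ⁻¹' {c}) * condMI μ[|C ⁻¹' {c}] (fun ω k => Ztil k ω) Y X := by
    intro c
    by_cases hc0 : μ (C ⁻¹' {c}) = 0
    · simp [measureReal_def, hc0]
    exact mul_le_mul_of_nonneg_left (condEntH_sub_sum_le_condMI_cond hC hc0 hd1 hX hY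
      (measurable_pi_lambda _ hZtil) hU _ ha fun j hj => he c hc0 j (by simpa using hj))
      measureReal_nonneg
  have hunc : ∀ j, μ.real {ω | ∀ k, C ω j k = false} = (1 - α) ^ K := fun j => by
    simpa using measureReal_forall_eq_false_of_iIndepFun (by fun_prop) (hd3 j) hα.1.le (hd2 j)
  refine ⟨?_, ?_⟩
  · calc ∑ c, μ.real (C ⁻¹' {c}) * condMI μ[|C ⁻¹' {c}] (fun ω k => Ztil k ω) Y X
        ≥ ∑ c, μ.real (C ⁻¹' {c}) * (condEntH μ Y X
          - ∑ j ∈ univ.filter (fun j => ∀ k, c j k = false), condEntH μ (U j) X) :=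
          sum_le_sum fun c _ => hconf c
      _ = condEntH μ Y X * (1 - (1 - α) ^ K) := by
          simp only [mul_sub, sum_sub_distrib, ← sum_mul,
            sum_measureReal_preimage_singleton_eq_one hC,
            sum_measureReal_mul_sum_filter hC (fun j c => ∀ k, c j k = false), hunc]
          rw [hH]
          ring
  · exact mul_le_mul_of_nonneg_left (by linarith [one_sub_pow_le_exp_neg_mul hα.2.le K])
      (condEntH_nonneg hX hY)

/-- **Saturated lower bound (in expectation).**
Under the independent evidence-bits model (sufficiency, conditional independence given `X`,
matching uncertainty scale) and the fractional-coverage model (coverage indicators `C`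
independent of `(X, Y, U)`, each with probability `α`, independent across channels for each
fixed bit, and a covered bit has zero residual entropy), the expected recoverable information
satisfies `E_c[I(Z̃; Y | X)] ≥ H(Y | X)·(1 − (1 − α)^K) ≥ H(Y | X)·(1 − e^{−αK})`. -/
theorem saturated_lower_bound_effective_channels
    {Ω : Type*} [MeasurableSpace Ω] (μ : Measure Ω) [IsProbabilityMeasure μ]
    {𝓧 𝓨 : Type*} [Fintype 𝓧] [Nonempty 𝓧] [Fintype 𝓨] [Nonempty 𝓨]
    [MeasurableSpace 𝓧] [DiscreteMeasurableSpace 𝓧]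
    [MeasurableSpace 𝓨] [DiscreteMeasurableSpace 𝓨]
    {M K : ℕ} (hM : 0 < M) (hK : 0 < K)
    {𝓤 : Fin M → Type*} [∀ j, Fintype (𝓤 j)] [∀ j, Nonempty (𝓤 j)]
    [∀ j, MeasurableSpace (𝓤 j)] [∀ j, DiscreteMeasurableSpace (𝓤 j)]
    {𝓩 : Fin K → Type*} [∀ k, Fintype (𝓩 k)] [∀ k, Nonempty (𝓩 k)]
    [∀ k, MeasurableSpace (𝓩 k)] [∀ k, DiscreteMeasurableSpace (𝓩 k)]
    (X : Ω → 𝓧) (Y : Ω → 𝓨) (U : ∀ j, Ω → 𝓤 j) (Ztil : ∀ k, Ω → 𝓩 k)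
    (C : Ω → (Fin M → Fin K → Bool))
    (hX : Measurable X) (hY : Measurable Y) (hU : ∀ j, Measurable (U j))
    (hZtil : ∀ k, Measurable (Ztil k)) (hC : Measurable C)
    {α : ℝ} (hα : α ∈ Set.Ioo (0 : ℝ) 1)
    -- (a) sufficiency: H(Y | X, U) = 0
    (ha : condEntH μ Y (fun ω => (X ω, fun j => U j ω)) = 0)
    -- (b) the U_j are mutually conditionally independent given X
    (hb : ∀ x : 𝓧, μ (X ⁻¹' {x}) ≠ 0 →
        iIndepFun U (μ[|X ⁻¹' {x}]))
    -- (c) matching uncertainty scale: H(U | X) = H(Y | X)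
    (hc : condEntH μ (fun ω (j : Fin M) => U j ω) X = condEntH μ Y X)
    -- (d) coverage indicators: independent of (X, Y, U), each of probability α,
    --     and independent across channels for each fixed bit j
    (hd1 : IndepFun C (fun ω => (X ω, Y ω, fun j => U j ω)) μ)
    (hd2 : ∀ j k, μ {ω | C ω j k = true} = ENNReal.ofReal α)
    (hd3 : ∀ j : Fin M, iIndepFun (fun k ω => C ω j k) μ)
    -- (e) a covered bit has zero residual entropy given (X, Z̃)
    (he : ∀ c : Fin M → Fin K → Bool, μ (C ⁻¹' {c}) ≠ 0 → ∀ j : Fin M,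
        (∃ k, c j k = true) →
        condEntH (μ[|C ⁻¹' {c}]) (U j) (fun ω => (X ω, fun k => Ztil k ω)) = 0) :
    (∑ c : Fin M → Fin K → Bool, (μ (C ⁻¹' {c})).toReal *
        condMI (μ[|C ⁻¹' {c}]) (fun ω (k : Fin K) => Ztil k ω) Y X)
      ≥ condEntH μ Y X * (1 - (1 - α) ^ K) ∧
    condEntH μ Y X * (1 - (1 - α) ^ K) ≥ condEntH μ Y X * (1 - Real.exp (-(α * K))) :=
  saturated_lower_bound_effective_channels_general μ X Y U Ztil C hX hY hU hZtil hC hα ha hb hc hd1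
    hd2 hd3 he
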